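/- Let R > 1 and let ω be a holomorphic function on the annulus A(1/R, R) = {z ∈ ℂ : 1/R < |z| < R} with |ω(z)| < 1 for all z. Then for every z ∈ A(1/R, R), |ω'(z)| < π·(1 − |ω(z)|²) / (4·|z|·log R · cos(π·log|z|/(2·log R))). (Note that |log|z|| < log R on the annulus, so the cosine is positive.) -/

import Mathlib

/-!
For `R = e^a` the map `F v = (z / |z|) · exp ((2a/π) i log v)` is a holomorphic covering of the
annulus by the right half-plane, with `F (e^{-is}) = z` for `s = π log |z| / (2a)` and
`F (e^{π²/a} v) = F v`. So `ω ∘ F` is a non-injective holomorphic map of the half-plane into the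
disk, and the strict Schwarz–Pick inequality for such maps, at `v₀ = e^{-is}`, reads
`|ω'(z)| · |F'(v₀)| · 2 Re v₀ < 1 - |ω z|²` with `|F'(v₀)| · 2 Re v₀ = 4 |z| a cos s / π`.
Strictness comes from the equality case of the Schwarz lemma: a rotation is injective.
-/

open Complex Metric MeasureTheory

/-- Wirtinger derivative ∂f/∂z = (f_x - i f_y)/2. -/
noncomputable def wz (f : ℂ → ℂ) (z : ℂ) : ℂ :=
  (fderiv ℝ f z 1 - Complex.I * fderiv ℝ f z Complex.I) / 2

/-- Wirtinger derivative ∂f/∂z̄ = (f_x + i f_y)/2. -/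
noncomputable def wzbar (f : ℂ → ℂ) (z : ℂ) : ℂ :=
  (fderiv ℝ f z 1 + Complex.I * fderiv ℝ f z Complex.I) / 2

/-- Euclidean Laplacian of a real-valued function on ℂ. -/
noncomputable def lap (u : ℂ → ℝ) (z : ℂ) : ℝ :=
  fderiv ℝ (fun w => fderiv ℝ u w 1) z 1 +
  fderiv ℝ (fun w => fderiv ℝ u w Complex.I) z Complex.I

/-- ∂_w u = (u_x - i u_y)/2 for a real-valued u, as a complex number. -/
noncomputable def dw (u : ℂ → ℝ) (w : ℂ) : ℂ :=
  ((fderiv ℝ u w 1 : ℝ) - Complex.I * (fderiv ℝ u w Complex.I : ℝ)) / 2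

/-- f is ℘-harmonic on D: f_{zz̄} + 2 (∂_w log ℘)∘f · f_z · f_{z̄} = 0. -/
def PHarmOn (p : ℂ → ℝ) (f : ℂ → ℂ) (D : Set ℂ) : Prop :=
  ∀ z ∈ D,
    wzbar (fun w => wz f w) z
      + 2 * dw (fun w => Real.log (p w)) (f z) * wz f z * wzbar f z = 0

/-- |∇u|² for a real-valued u on ℂ. -/
noncomputable def gradSq (u : ℂ → ℝ) (w : ℂ) : ℝ :=
  (fderiv ℝ u w 1) ^ 2 + (fderiv ℝ u w Complex.I) ^ 2

/-- The ℘-minimal surface equation div(∇ω/√(1+|∇ω|²/℘²)) = 0 on Ω. -/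
def MinSurfEq (p : ℂ → ℝ) (ω : ℂ → ℝ) (Ω : Set ℂ) : Prop :=
  ∀ w ∈ Ω,
    fderiv ℝ (fun v => fderiv ℝ ω v 1 / Real.sqrt (1 + gradSq ω v / (p v) ^ 2)) w 1 +
    fderiv ℝ (fun v => fderiv ℝ ω v Complex.I / Real.sqrt (1 + gradSq ω v / (p v) ^ 2)) w
      Complex.I = 0

/-- The annulus {z : r < |z| < R}. -/
def Ann (r R : ℝ) : Set ℂ := {z : ℂ | r < ‖z‖ ∧ ‖z‖ < R}

open ComplexConjugate

noncomputable def blaschkeFactor (α w : ℂ) : ℂ := (w - α) / (1 - conj α * w)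

lemma one_sub_ne_zero_of_norm_lt_one {w : ℂ} (hw : ‖w‖ < 1) : 1 - w ≠ 0 :=
  sub_ne_zero.2 fun h => by simp [← h] at hw

lemma one_sub_conj_mul_ne_zero {α w : ℂ} (hα : ‖α‖ < 1) (hw : ‖w‖ < 1) :
    1 - conj α * w ≠ 0 := by
  refine one_sub_ne_zero_of_norm_lt_one ?_
  rw [norm_mul, Complex.norm_conj]
  exact mul_lt_one_of_nonneg_of_lt_one_left (norm_nonneg α) hα hw.le

lemma normSq_one_sub_conj_mul_sub_normSq_sub (α w : ℂ) :
    normSq (1 - conj α * w) - normSq (w - α) = (1 - normSq α) * (1 - normSq w) := by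
  simp only [normSq_apply, sub_re, sub_im, mul_re, mul_im, one_re, one_im, conj_re, conj_im]
  ring

lemma norm_blaschkeFactor_lt_one {α w : ℂ} (hα : ‖α‖ < 1) (hw : ‖w‖ < 1) :
    ‖blaschkeFactor α w‖ < 1 := by
  rw [blaschkeFactor, norm_div, div_lt_one (norm_pos_iff.2 (one_sub_conj_mul_ne_zero hα hw)),
    ← sq_lt_sq₀ (norm_nonneg _) (norm_nonneg _), Complex.sq_norm, Complex.sq_norm]
  have hα' : normSq α < 1 := by rw [← Complex.sq_norm]; nlinarith [norm_nonneg α]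
  have hw' : normSq w < 1 := by rw [← Complex.sq_norm]; nlinarith [norm_nonneg w]
  nlinarith [normSq_one_sub_conj_mul_sub_normSq_sub α w, mul_pos (sub_pos.2 hα') (sub_pos.2 hw')]

lemma blaschkeFactor_self (α : ℂ) : blaschkeFactor α α = 0 := by
  simp [blaschkeFactor]

lemma hasDerivAt_blaschkeFactor_self {α : ℂ} (hα : ‖α‖ < 1) :
    HasDerivAt (blaschkeFactor α) (1 - normSq α : ℂ)⁻¹ α := by
  have hden := one_sub_conj_mul_ne_zero hα hα
  have hnum : HasDerivAt (fun w => w - α) 1 α := (hasDerivAt_id α).sub_const α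
  have hden' : HasDerivAt (fun w => 1 - conj α * w) (-conj α) α := by
    simpa using ((hasDerivAt_id α).const_mul (conj α)).const_sub 1
  refine (hnum.div hden' hden).congr_deriv ?_
  rw [← Complex.mul_conj, mul_comm α] at *
  field_simp
  ring

theorem norm_deriv_lt_one_of_mapsTo_ball_of_eq_zero {f : ℂ → ℂ}
    (hd : DifferentiableOn ℂ f (ball 0 1)) (hf : Set.MapsTo f (ball 0 1) (ball 0 1))
    (h₀ : f 0 = 0) {w : ℂ} (hw : w ∈ ball (0 : ℂ) 1) (hw₀ : w ≠ 0) (hfw : f w = 0) :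
    ‖deriv f 0‖ < 1 := by
  have hmaps : Set.MapsTo f (ball 0 1) (closedBall (f 0) 1) := by
    rw [h₀]; exact hf.mono_right ball_subset_closedBall
  refine (norm_deriv_le_one_of_mapsTo_ball hd hmaps one_pos).lt_of_ne fun heq => ?_
  obtain ⟨C, hC, hf_eq⟩ := affine_of_mapsTo_ball_of_exists_norm_dslope_eq_div' hd hmaps
    ⟨0, mem_ball_self one_pos, by rw [dslope_same, heq, div_one]⟩
  have hC₀ : C ≠ 0 := by rintro rfl; simp at hC
  simpa [h₀, hfw, hw₀, hC₀, eq_comm] using hf_eq hw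

theorem norm_deriv_lt_one_sub_sq_of_mapsTo_ball {g : ℂ → ℂ}
    (hd : DifferentiableOn ℂ g (ball 0 1)) (hg : Set.MapsTo g (ball 0 1) (ball 0 1))
    {w : ℂ} (hw : w ∈ ball (0 : ℂ) 1) (hw₀ : w ≠ 0) (hgw : g w = g 0) :
    ‖deriv g 0‖ < 1 - ‖g 0‖ ^ 2 := by
  set α := g 0
  have hα : ‖α‖ < 1 := mem_ball_zero_iff.1 (hg (mem_ball_self one_pos))
  have hgb : ∀ v ∈ ball (0 : ℂ) 1, ‖g v‖ < 1 := fun v hv => mem_ball_zero_iff.1 (hg hv)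
  have hfd : DifferentiableOn ℂ (blaschkeFactor α ∘ g) (ball 0 1) :=
    (hd.sub_const α).div ((differentiableOn_const 1).sub (hd.const_mul _))
      fun v hv => one_sub_conj_mul_ne_zero hα (hgb v hv)
  have hf := norm_deriv_lt_one_of_mapsTo_ball_of_eq_zero hfd
    (fun v hv => mem_ball_zero_iff.2 (norm_blaschkeFactor_lt_one hα (hgb v hv)))
    (blaschkeFactor_self α) hw hw₀ (by simp [hgw, α, blaschkeFactor_self])
  have hg' : HasDerivAt g (deriv g 0) 0 :=
    (hd.differentiableAt (isOpen_ball.mem_nhds (mem_ball_self one_pos))).hasDerivAt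
  have hα₂ : 0 < 1 - ‖α‖ ^ 2 := by nlinarith [norm_nonneg α]
  rw [((hasDerivAt_blaschkeFactor_self hα).comp 0 hg').deriv, norm_mul, norm_inv,
    ← Complex.sq_norm, ← ofReal_one, ← ofReal_sub, norm_real,
    Real.norm_of_nonneg hα₂.le, inv_mul_lt_one₀ hα₂] at hf
  exact hf

noncomputable def cayley (v₀ w : ℂ) : ℂ := (v₀ + conj v₀ * w) / (1 - w)

lemma cayley_zero (v₀ : ℂ) : cayley v₀ 0 = v₀ := by
  simp [cayley]

lemma cayley_re (v₀ w : ℂ) :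
    (cayley v₀ w).re = v₀.re * (1 - normSq w) / normSq (1 - w) := by
  rw [cayley, div_re, ← add_div]
  congr 1
  simp only [normSq_apply, add_re, add_im, sub_re, sub_im, mul_re, mul_im, one_re, one_im,
    conj_re, conj_im]
  ring

lemma re_cayley_pos {v₀ w : ℂ} (hv₀ : 0 < v₀.re) (hw : ‖w‖ < 1) : 0 < (cayley v₀ w).re := by
  have hw' : normSq w < 1 := by rw [← Complex.sq_norm]; nlinarith [norm_nonneg w]
  rw [cayley_re]
  exact div_pos (mul_pos hv₀ (sub_pos.2 hw')) (normSq_pos.2 (one_sub_ne_zero_of_norm_lt_one hw))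

lemma differentiableOn_cayley (v₀ : ℂ) : DifferentiableOn ℂ (cayley v₀) (ball 0 1) :=
  ((differentiableOn_const v₀).add ((differentiableOn_const _).mul differentiableOn_id)).div
    ((differentiableOn_const 1).sub differentiableOn_id)
    fun _ hu => one_sub_ne_zero_of_norm_lt_one (mem_ball_zero_iff.1 hu)

lemma hasDerivAt_cayley_zero (v₀ : ℂ) : HasDerivAt (cayley v₀) (2 * v₀.re : ℂ) 0 := by
  have hnum : HasDerivAt (fun w => v₀ + conj v₀ * w) (conj v₀) 0 := by
    simpa using ((hasDerivAt_id (0 : ℂ)).const_mul (conj v₀)).const_add v₀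
  have hden : HasDerivAt (fun w : ℂ => 1 - w) (-1) 0 := by
    simpa using (hasDerivAt_id (0 : ℂ)).const_sub 1
  refine (hnum.div hden (by simp)).congr_deriv ?_
  rw [← ofReal_ofNat, ← ofReal_mul, ← add_conj]
  simp only [sub_zero, mul_one, mul_zero, add_zero, mul_neg, sub_neg_eq_add, one_pow, div_one]
  ring

lemma exists_cayley_eq {v₀ v : ℂ} (hv₀ : 0 < v₀.re) (hv : 0 < v.re) :
    ∃ w ∈ ball (0 : ℂ) 1, cayley v₀ w = v := by
  have hden : v + conj v₀ ≠ 0 := fun h => by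
    have := congrArg re h
    simp only [add_re, conj_re, zero_re] at this
    linarith
  refine ⟨(v - v₀) / (v + conj v₀), ?_, ?_⟩
  · rw [mem_ball_zero_iff, norm_div, div_lt_one (norm_pos_iff.2 hden),
      ← sq_lt_sq₀ (norm_nonneg _) (norm_nonneg _), Complex.sq_norm, Complex.sq_norm]
    have hdiff : normSq (v + conj v₀) - normSq (v - v₀) = 4 * v.re * v₀.re := by
      simp only [normSq_apply, add_re, add_im, sub_re, sub_im, conj_re, conj_im]
      ring
    nlinarith [mul_pos hv hv₀]
  · have hden' : 1 - (v - v₀) / (v + conj v₀) ≠ 0 := by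
      rw [one_sub_div hden]
      refine div_ne_zero (fun h => ?_) hden
      have := congrArg re h
      simp only [sub_re, add_re, conj_re, zero_re] at this
      linarith
    rw [cayley, div_eq_iff hden']
    field_simp
    ring

theorem norm_deriv_mul_two_re_lt {G : ℂ → ℂ} (hd : DifferentiableOn ℂ G {v | 0 < v.re})
    (hG : Set.MapsTo G {v | 0 < v.re} (ball 0 1)) {v₀ v₁ : ℂ} (hv₀ : 0 < v₀.re)
    (hv₁ : 0 < v₁.re) (hne : v₁ ≠ v₀) (heq : G v₁ = G v₀) :
    ‖deriv G v₀‖ * (2 * v₀.re) < 1 - ‖G v₀‖ ^ 2 := by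
  have hopen : IsOpen {v : ℂ | 0 < v.re} := isOpen_lt continuous_const continuous_re
  obtain ⟨w, hw, hw_eq⟩ := exists_cayley_eq hv₀ hv₁
  have hmaps : Set.MapsTo (cayley v₀) (ball 0 1) {v | 0 < v.re} := fun u hu =>
    re_cayley_pos hv₀ (mem_ball_zero_iff.1 hu)
  have hSP := norm_deriv_lt_one_sub_sq_of_mapsTo_ball
    (hd.comp (differentiableOn_cayley v₀) hmaps) (hG.comp hmaps) hw
    (by rintro rfl; exact hne (by rw [← hw_eq, cayley_zero]))
    (by simp [hw_eq, cayley_zero, heq])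
  have hG' : HasDerivAt G (deriv G v₀) (cayley v₀ 0) := by
    rw [cayley_zero]
    exact (hd.differentiableAt (hopen.mem_nhds hv₀)).hasDerivAt
  rw [(hG'.comp 0 (hasDerivAt_cayley_zero v₀)).deriv, Function.comp_apply, cayley_zero,
    norm_mul, ← ofReal_ofNat, ← ofReal_mul, norm_real, Real.norm_of_nonneg (by positivity)] at hSP
  exact hSP

noncomputable def annulusCover (a : ℝ) (c v : ℂ) : ℂ :=
  c * exp ((2 * a / Real.pi : ℝ) * I * log v)

lemma norm_annulusCover (a : ℝ) {c : ℂ} (hc : ‖c‖ = 1) (v : ℂ) :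
    ‖annulusCover a c v‖ = Real.exp (-(2 * a / Real.pi * arg v)) := by
  simp [annulusCover, norm_exp, hc, log_im]

lemma annulusCover_mem_Ann {a : ℝ} (ha : 0 < a) {c v : ℂ} (hc : ‖c‖ = 1) (hv : 0 < v.re) :
    annulusCover a c v ∈ Ann (Real.exp (-a)) (Real.exp a) := by
  have harg : |arg v| < Real.pi / 2 := abs_arg_lt_pi_div_two_iff.2 (Or.inl hv)
  have hlt : |2 * a / Real.pi * arg v| < a := by
    rw [abs_mul, abs_of_pos (by positivity)]
    calc _ < 2 * a / Real.pi * (Real.pi / 2) := by gcongr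
      _ = a := by field_simp
  rw [abs_lt] at hlt
  constructor <;> rw [norm_annulusCover a hc, Real.exp_lt_exp] <;> linarith

lemma hasDerivAt_annulusCover (a : ℝ) (c : ℂ) {v : ℂ} (hv : v ∈ slitPlane) :
    HasDerivAt (annulusCover a c)
      (annulusCover a c v * ((2 * a / Real.pi : ℝ) * I / v)) v := by
  refine ((((hasDerivAt_log hv).const_mul _).cexp).const_mul c).congr_deriv ?_
  rw [annulusCover, div_eq_mul_inv]
  ring

lemma annulusCover_exp_mul {a : ℝ} (ha : 0 < a) (c : ℂ) {v : ℂ} (hv : v ≠ 0) :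
    annulusCover a c (Real.exp (Real.pi ^ 2 / a) * v) = annulusCover a c v := by
  have hperiod : ((2 * a / Real.pi : ℝ) : ℂ) * I * ((Real.pi ^ 2 / a : ℝ) : ℂ)
      = 2 * Real.pi * I := by
    have : (a : ℂ) ≠ 0 := ofReal_ne_zero.2 ha.ne'
    push_cast
    field_simp
  rw [annulusCover, annulusCover, log_ofReal_mul (Real.exp_pos _) hv, Real.log_exp, mul_add,
    exp_add, hperiod, exp_two_pi_mul_I, one_mul]

lemma abs_log_norm_lt_of_mem_Ann {a : ℝ} {z : ℂ} (hz : z ∈ Ann (Real.exp (-a)) (Real.exp a)) :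
    |Real.log ‖z‖| < a := by
  have hz₀ : 0 < ‖z‖ := (Real.exp_pos _).trans hz.1
  rw [abs_lt, Real.lt_log_iff_exp_lt hz₀, Real.log_lt_iff_lt_exp hz₀]
  exact hz

lemma abs_pi_mul_log_norm_div_lt {a : ℝ} (ha : 0 < a) {z : ℂ}
    (hz : z ∈ Ann (Real.exp (-a)) (Real.exp a)) :
    |Real.pi * Real.log ‖z‖ / (2 * a)| < Real.pi / 2 := by
  rw [abs_div, abs_mul, abs_of_pos Real.pi_pos, abs_of_pos (by linarith : (0 : ℝ) < 2 * a),
    div_lt_iff₀ (by linarith)]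
  nlinarith [abs_log_norm_lt_of_mem_Ann hz, Real.pi_pos]

lemma annulusCover_exp_mul_I {a : ℝ} (ha : 0 < a) {z : ℂ}
    (hz : z ∈ Ann (Real.exp (-a)) (Real.exp a)) :
    annulusCover a (z / ‖z‖) (exp ((-(Real.pi * Real.log ‖z‖ / (2 * a)) : ℝ) * I)) = z := by
  have hz₀ : 0 < ‖z‖ := (Real.exp_pos _).trans hz.1
  have hs := abs_lt.1 (abs_pi_mul_log_norm_div_lt ha hz)
  have hκs : ((2 * a / Real.pi : ℝ) : ℂ) * I * ((-(Real.pi * Real.log ‖z‖ / (2 * a)) : ℝ) * I)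
      = Real.log ‖z‖ := by
    have : (a : ℂ) ≠ 0 := ofReal_ne_zero.2 ha.ne'
    have : (Real.pi : ℂ) ≠ 0 := ofReal_ne_zero.2 Real.pi_pos.ne'
    push_cast
    field_simp
    rw [I_sq]
    ring
  set s := Real.pi * Real.log ‖z‖ / (2 * a)
  have him : (((-s : ℝ) : ℂ) * I).im = -s := by rw [mul_I_im, ofReal_re]
  rw [annulusCover, log_exp (by rw [him]; linarith [Real.pi_pos]) (by rw [him]; linarith),
    hκs, ← ofReal_exp, Real.exp_log hz₀, div_mul_cancel₀ _ (ofReal_ne_zero.2 hz₀.ne')]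

lemma isOpen_Ann (r R : ℝ) : IsOpen (Ann r R) :=
  isOpen_Ioo.preimage continuous_norm

theorem norm_deriv_lt_of_mapsTo_Ann {a : ℝ} (ha : 0 < a) {ω : ℂ → ℂ}
    (hω : DifferentiableOn ℂ ω (Ann (Real.exp (-a)) (Real.exp a)))
    (hb : Set.MapsTo ω (Ann (Real.exp (-a)) (Real.exp a)) (ball 0 1))
    {z : ℂ} (hz : z ∈ Ann (Real.exp (-a)) (Real.exp a)) :
    ‖deriv ω z‖ < Real.pi * (1 - ‖ω z‖ ^ 2) /
      (4 * ‖z‖ * a * Real.cos (Real.pi * Real.log ‖z‖ / (2 * a))) := by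
  have hz₀ : 0 < ‖z‖ := (Real.exp_pos _).trans hz.1
  have hs := abs_lt.1 (abs_pi_mul_log_norm_div_lt ha hz)
  set s := Real.pi * Real.log ‖z‖ / (2 * a)
  have hcos : 0 < Real.cos s := Real.cos_pos_of_mem_Ioo hs
  set F := annulusCover a (z / ‖z‖)
  set v₀ := exp ((-s : ℝ) * I)
  have hc : ‖z / ‖z‖‖ = 1 := by simp [hz₀.ne']
  have hv₀ : v₀.re = Real.cos s := by rw [exp_ofReal_mul_I_re, Real.cos_neg]
  have hv₀_pos : 0 < v₀.re := hv₀ ▸ hcos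
  have hF : Set.MapsTo F {v | 0 < v.re} (Ann (Real.exp (-a)) (Real.exp a)) :=
    fun v hv => annulusCover_mem_Ann ha hc hv
  have hFd : DifferentiableOn ℂ F {v | 0 < v.re} := fun v hv =>
    (hasDerivAt_annulusCover a _ (Or.inl hv)).differentiableAt.differentiableWithinAt
  have hFv₀ : F v₀ = z := annulusCover_exp_mul_I ha hz
  set v₁ := (Real.exp (Real.pi ^ 2 / a) : ℂ) * v₀
  have hv₁ : 0 < v₁.re := by
    rw [re_ofReal_mul, hv₀]
    positivity
  have hne : v₁ ≠ v₀ := by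
    rw [Ne, mul_eq_right₀ (exp_ne_zero _), ofReal_eq_one, Real.exp_eq_one_iff]
    positivity
  have hSP := norm_deriv_mul_two_re_lt (hω.comp hFd hF) (hb.comp hF) hv₀_pos hv₁ hne
    (congrArg ω (annulusCover_exp_mul ha _ (exp_ne_zero _)))
  have hω' : HasDerivAt ω (deriv ω z) (F v₀) := by
    rw [hFv₀]
    exact (hω.differentiableAt ((isOpen_Ann _ _).mem_nhds hz)).hasDerivAt
  have hnorm : ‖deriv (ω ∘ F) v₀‖ = ‖deriv ω z‖ * (‖z‖ * (2 * a / Real.pi)) := by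
    rw [(hω'.comp v₀ (hasDerivAt_annulusCover a _ (Or.inl hv₀_pos))).deriv]
    change ‖deriv ω z * (F v₀ * _)‖ = _
    rw [hFv₀]
    simp [v₀, norm_exp, abs_of_pos ha, abs_of_pos Real.pi_pos]
  rw [hnorm, hv₀, Function.comp_apply, hFv₀] at hSP
  rw [lt_div_iff₀ (by positivity)]
  calc ‖deriv ω z‖ * (4 * ‖z‖ * a * Real.cos s)
      = ‖deriv ω z‖ * (‖z‖ * (2 * a / Real.pi)) * (2 * Real.cos s) * Real.pi := by
        field_simp; ring
    _ < (1 - ‖ω z‖ ^ 2) * Real.pi := by gcongr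
    _ = Real.pi * (1 - ‖ω z‖ ^ 2) := mul_comm _ _

/-- Schwarz–Pick type inequality for holomorphic maps of the annulus
A(1/R,R) into the unit disk. -/
theorem stmt11 (R : ℝ) (hR : 1 < R) (ω : ℂ → ℂ)
    (hω : DifferentiableOn ℂ ω (Ann (1/R) R))
    (hb : ∀ z ∈ Ann (1/R) R, ‖ω z‖ < 1) :
    ∀ z ∈ Ann (1/R) R,
      ‖deriv ω z‖ <
        Real.pi * (1 - ‖ω z‖ ^ 2) /
          (4 * ‖z‖ * Real.log R *
            Real.cos (Real.pi * Real.log (‖z‖) / (2 * Real.log R))) := by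
  have hAnn : Ann (1 / R) R = Ann (Real.exp (-Real.log R)) (Real.exp (Real.log R)) := by
    rw [Real.exp_neg, Real.exp_log (by linarith), one_div]
  rw [hAnn] at hω hb ⊢
  exact fun z hz => norm_deriv_lt_of_mapsTo_Ann (Real.log_pos hR) hω
    (fun w hw => mem_ball_zero_iff.2 (hb w hw)) hz
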